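/- arXiv:2308.15625 — 7 statements merged into one kernel-verified Lean document; each statement's English description precedes it below -/
import Mathlib

section
/- Let D be a finite distributive lattice generated (as a lattice) by elements g₁, …, g_n. Then every join-irreducible element of D is a meet of some nonempty subset of {g₁, …, g_n}. -/
/-!
In a distributive lattice every element generated by a set `S` is a join of meets of elements
of `S`. A join-irreducible element equal to such a finite join must equal one of the joinands,
so it is a meet of generators.
-/

theorem SupIrred.finset_sup'_eq {α ι : Type*} [SemilatticeSup α] {a : α} (ha : SupIrred a)
    {s : Finset ι} (hs : s.Nonempty) {f : ι → α} (h : s.sup' hs f = a) : ∃ i ∈ s, f i = a := by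
  induction hs using Finset.Nonempty.cons_induction with
  | singleton i => exact ⟨i, Finset.mem_singleton_self i, by simpa using h⟩
  | cons i s hi hs ih =>
    rw [Finset.sup'_cons hs] at h
    obtain h | h := ha.2 h
    · exact ⟨i, Finset.mem_cons_self i s, h⟩
    · obtain ⟨j, hj, hfj⟩ := ih h
      exact ⟨j, Finset.mem_cons_of_mem hj, hfj⟩

theorem exists_finset_inf'_eq_of_mem_infClosure_range {α ι : Type*} [SemilatticeInf α]
    {g : ι → α} {a : α} (ha : a ∈ infClosure (Set.range g)) :
    ∃ s : Finset ι, ∃ hs : s.Nonempty, s.inf' hs g = a := by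
  classical
  obtain ⟨t, ht, hts, rfl⟩ := ha
  rw [← Set.image_univ, Finset.subset_set_image_iff] at hts
  obtain ⟨s, -, rfl⟩ := hts
  exact ⟨s, ht.of_image, (Finset.inf'_image ht id).symm⟩

theorem stmt_7_general (D : Type*) [DistribLattice D] (n : ℕ) (g : Fin n → D)
    (hgen : ∀ L : Sublattice D, (∀ i : Fin n, g i ∈ L) → ∀ x : D, x ∈ L) :
    ∀ u : D, SupIrred u → ∃ s : Finset (Fin n), ∃ hs : s.Nonempty, u = s.inf' hs g := by
  intro u hu
  have hu_mem : u ∈ supClosure (infClosure (Set.range g)) := by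
    rw [supClosure_infClosure]
    exact hgen ⟨latticeClosure (Set.range g), isSublattice_latticeClosure.1,
      isSublattice_latticeClosure.2⟩ (fun i => subset_latticeClosure ⟨i, rfl⟩) u
  obtain ⟨t, ht, hts, hsup⟩ := hu_mem
  obtain ⟨a, ha, rfl⟩ := hu.finset_sup'_eq ht hsup
  obtain ⟨s, hs, hsa⟩ := exists_finset_inf'_eq_of_mem_infClosure_range (hts ha)
  exact ⟨s, hs, hsa.symm⟩

/-- If a finite distributive lattice `D` is generated (as a lattice) by
`g 1, …, g n`, then every join-irreducible element of `D` is the meet of a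
nonempty subset of the generators. -/
theorem stmt_7 (D : Type*) [DistribLattice D] [Fintype D] (n : ℕ) (g : Fin n → D)
    (hgen : ∀ L : Sublattice D, (∀ i : Fin n, g i ∈ L) → ∀ x : D, x ∈ L) :
    ∀ u : D, SupIrred u → ∃ s : Finset (Fin n), ∃ hs : s.Nonempty, u = s.inf' hs g :=
  stmt_7_general D n g hgen
end

section
/- Let U be a finite poset and p = min {p' : U order-embeds into P([p'])}. Then for all n ≥ p, the maximum number Sp(U,n) of pairwise unrelated copies of U in the powerset lattice P([n]) satisfies Sp(U,n) ≥ C(n−p, ⌊(n−p)/2⌋). -/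
/-!
Fix a copy of `U` in `P([p])` and, on the remaining `m = n - p` points, the antichain of all
`⌊m/2⌋`-subsets, of size `C(m, ⌊m/2⌋)`. For each set `S` of the antichain the sets `A ∪ S`,
with `A` running over the copy of `U`, form a copy of `U` in `P([n])`; since `A ∪ S ⊆ A' ∪ S'`
forces `S ⊆ S'`, hence `S = S'`, copies belonging to different `S` are unrelated.
-/

def OrderEmbedding.setIic (α : Type*) [PartialOrder α] : α ↪o Set α :=
  OrderEmbedding.ofMapLEIff Set.Iic fun _ _ => Set.Iic_subset_Iic

theorem nonempty_orderEmbedding_set_fin_card (α : Type*) [PartialOrder α] [Fintype α] :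
    Nonempty (α ↪o Set (Fin (Fintype.card α))) :=
  ⟨(OrderEmbedding.setIic α).trans (Fintype.equivFin α).toOrderIsoSet.toOrderEmbedding⟩

section

variable {ι α β γ : Type*}

def OrderEmbedding.sigmaProd [PartialOrder α] [Preorder β] [Preorder γ] (e : α ↪o β) (f : ι → γ)
    (hf : ∀ i j, f i ≤ f j → i = j) : (Σ _ : ι, α) ↪o β × γ :=
  OrderEmbedding.ofMapLEIff (fun x : Σ _ : ι, α => (e x.2, f x.1)) <| by
    rintro ⟨i, a⟩ ⟨j, b⟩
    constructor
    · rintro ⟨hab, hij⟩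
      obtain rfl := hf i j hij
      exact Sigma.mk_le_mk_iff.mpr (e.le_iff_le.mp hab)
    · rintro ⟨_, _, _, hab⟩
      exact ⟨e.le_iff_le.mpr hab, le_rfl⟩

def OrderEmbedding.sigmaSetSum [PartialOrder α] (e : α ↪o Set β) (f : ι → Set γ)
    (hf : ∀ i j, f i ≤ f j → i = j) : (Σ _ : ι, α) ↪o Set (β ⊕ γ) :=
  (e.sigmaProd f hf).trans Set.sumEquiv.symm.toOrderEmbedding

theorem exists_antichain_fin_choose (m r : ℕ) :
    ∃ f : Fin (m.choose r) → Set (Fin m), ∀ i j, f i ≤ f j → i = j := by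
  have hcard : Fintype.card {s : Finset (Fin m) // s.card = r} = m.choose r := by
    simp [Fintype.card_finset_len]
  let c := (Fintype.equivFinOfCardEq hcard).symm
  refine ⟨fun i => (c i : Finset (Fin m)), fun i j hij => c.injective <| Subtype.ext ?_⟩
  exact Finset.eq_of_subset_of_card_le (Finset.coe_subset.mp hij) (by rw [(c i).2, (c j).2])

theorem bddAbove_setOf_nonempty_sigma_orderEmbedding [Nonempty α] [LE α] [LE β] [Fintype β] :
    BddAbove {k : ℕ | Nonempty ((Σ _ : Fin k, α) ↪o β)} := by
  refine ⟨Fintype.card β, fun k ⟨f⟩ => ?_⟩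
  have hinj : Function.Injective fun i : Fin k => f ⟨i, Classical.arbitrary α⟩ :=
    fun i j hij => congrArg Sigma.fst (f.injective hij)
  simpa using Fintype.card_le_of_injective _ hinj

end

/-- Lower estimate for the Sperner number: if `p = min {p' : U ↪o P([p'])}`,
then for `n ≥ p`, `Sp(U,n) ≥ C(n-p, ⌊(n-p)/2⌋)`, where `Sp(U,n)` is the largest
`k` such that the cardinal sum of `k` copies of `U` embeds into `P([n])`. -/
theorem stmt_11 (U : Type*) [PartialOrder U] [Fintype U] [Nonempty U]
    (p : ℕ) (hp : p = sInf {p' : ℕ | Nonempty (U ↪o Set (Fin p'))})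
    (n : ℕ) (hn : p ≤ n) :
    (n - p).choose ((n - p) / 2)
      ≤ sSup {k : ℕ | Nonempty ((Σ _ : Fin k, U) ↪o Set (Fin n))} := by
  obtain ⟨e⟩ : p ∈ {p' : ℕ | Nonempty (U ↪o Set (Fin p'))} :=
    hp ▸ Nat.sInf_mem ⟨_, nonempty_orderEmbedding_set_fin_card U⟩
  obtain ⟨f, hf⟩ := exists_antichain_fin_choose (n - p) ((n - p) / 2)
  let reindex : Fin p ⊕ Fin (n - p) ≃ Fin n :=
    finSumFinEquiv.trans (finCongr (Nat.add_sub_cancel' hn))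
  exact le_csSup bddAbove_setOf_nonempty_sigma_orderEmbedding
    ⟨(e.sigmaSetSum f hf).trans reindex.toOrderIsoSet.toOrderEmbedding⟩
end

section
/- Let U be a finite bounded poset (with least element 0_U and greatest element 1_U) and p = min {p' : U order-embeds into P([p'])}. Then for all n ≥ p, Sp(U,n) = C(n−p, ⌊(n−p)/2⌋), where Sp(U,n) is the maximum number of pairwise unrelated copies of U in the powerset lattice of [n]. -/
/-!
A copy of `U` in `P([n])` lies in the interval `[A, B]` between the images of `⊥` and `⊤`, which
is the power set of `B \ A`; hence `|B| - |A| ≥ p`. Incomparability of distinct copies means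
`A_i ⊈ B_j` for `i ≠ j`, so the pairs `(A_i, [n] \ B_i)` satisfy the hypotheses of Bollobás'
set-pair inequality, proved by Lubell's permutation count, and `|A_i| + |[n] \ B_i| ≤ n - p`
bounds their number by `C(n - p, ⌊(n - p)/2⌋)`. Conversely, a copy of `U` in `P([p])` placed
beside each member of the middle layer of `P([n - p])` gives that many copies.
-/

open Finset

section SetPairs

variable {α : Type*} [LinearOrder α]

lemma Finset.exists_subset_card_eq_forall_lt {β : Type*} [DecidableEq β] {f : β → α}
    (hf : Function.Injective f) (G : Finset β) {c : ℕ} (hc : c ≤ #G) :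
    ∃ S ⊆ G, #S = c ∧ ∀ x ∈ S, ∀ y ∈ G \ S, f x < f y := by
  induction G using Finset.induction_on_max_value f generalizing c with
  | empty => exact ⟨∅, subset_refl _, by simp_all, by simp⟩
  | insert a s ha hmax ih =>
    rw [card_insert_of_notMem ha] at hc
    rcases hc.lt_or_eq with hc | rfl
    · obtain ⟨S, hSs, hSc, hlt⟩ := ih (Nat.le_of_lt_succ hc)
      refine ⟨S, hSs.trans (subset_insert a s), hSc, fun x hx y hy => ?_⟩
      rw [mem_sdiff, mem_insert] at hy
      rcases hy with ⟨rfl | hys, hyS⟩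
      · exact (hmax x (hSs hx)).lt_of_ne (hf.ne (ne_of_mem_of_not_mem (hSs hx) ha))
      · exact hlt x hx y (mem_sdiff.2 ⟨hys, hyS⟩)
    · exact ⟨insert a s, subset_refl _, card_insert_of_notMem ha, by simp⟩

lemma Finset.exists_perm_mapsTo_of_card_eq {β : Type*} [Fintype β] [DecidableEq β]
    {C D S T : Finset β} (hCD : Disjoint C D) (hST : Disjoint S T) (hCS : #C = #S)
    (hDT : #D = #T) : ∃ π : Equiv.Perm β, Set.MapsTo π C S ∧ Set.MapsTo π D T := by
  let e : {x // x ∈ C ∪ D} ≃ {x // x ∈ S ∪ T} :=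
    (Equiv.Finset.union C D hCD).symm.trans <|
      (Equiv.sumCongr (Fintype.equivOfCardEq (by simpa using hCS))
        (Fintype.equivOfCardEq (by simpa using hDT))).trans (Equiv.Finset.union S T hST)
  refine ⟨e.extendSubtype, fun x hx => ?_, fun x hx => ?_⟩
  · rw [e.extendSubtype_apply_of_mem x (mem_union_left _ hx)]
    simp [e, Equiv.Finset.union_symm_left hCD hx]
  · rw [e.extendSubtype_apply_of_mem x (mem_union_right _ hx)]
    simp [e, Equiv.Finset.union_symm_right hCD hx]

variable [Fintype α]

lemma factorial_card_le_card_filter_mul_choose {C D : Finset α} (hCD : Disjoint C D) :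
    (Fintype.card α).factorial ≤
      #{σ : Equiv.Perm α | ∀ x ∈ C, ∀ y ∈ D, σ x < σ y} * (#C + #D).choose #C := by
  set G := C ∪ D
  have hG : #G = #C + #D := card_union_of_disjoint hCD
  have hcover : (univ : Finset (Equiv.Perm α)) ⊆ (G.powersetCard #C).biUnion
      fun S => {σ : Equiv.Perm α | ∀ x ∈ S, ∀ y ∈ G \ S, σ x < σ y} := by
    intro σ _
    obtain ⟨S, hSG, hSc, hlt⟩ :=
      G.exists_subset_card_eq_forall_lt σ.injective (c := #C) (by omega)
    exact mem_biUnion.2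
      ⟨S, mem_powersetCard.2 ⟨hSG, hSc⟩, mem_filter.2 ⟨mem_univ _, hlt⟩⟩
  -- Precomposing with a permutation sending `C` into `S` and `D` into `G \ S` moves the
  -- permutations ranking `S` below `G \ S` injectively into those ranking `C` below `D`.
  have hfiber : ∀ S ∈ G.powersetCard #C,
      #{σ : Equiv.Perm α | ∀ x ∈ S, ∀ y ∈ G \ S, σ x < σ y} ≤
        #{σ : Equiv.Perm α | ∀ x ∈ C, ∀ y ∈ D, σ x < σ y} := by
    intro S hS
    obtain ⟨hSG, hSc⟩ := mem_powersetCard.1 hS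
    obtain ⟨π, hπC, hπD⟩ := exists_perm_mapsTo_of_card_eq hCD disjoint_sdiff hSc.symm
      (by rw [card_sdiff_of_subset hSG]; omega)
    refine card_le_card_of_injOn (π.trans ·) (fun σ hσ => ?_) (fun σ _ τ _ h => ?_)
    · simp only [coe_filter, mem_univ, true_and] at hσ ⊢
      exact fun x hx y hy => hσ _ (hπC hx) _ (hπD hy)
    · ext x
      simpa using Equiv.congr_fun h (π.symm x)
  calc (Fintype.card α).factorial = #(univ : Finset (Equiv.Perm α)) := by
        rw [card_univ, Fintype.card_perm]
    _ ≤ #(G.powersetCard #C) * #{σ : Equiv.Perm α | ∀ x ∈ C, ∀ y ∈ D, σ x < σ y} :=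
        (card_le_card hcover).trans (card_biUnion_le_card_mul _ _ _ hfiber)
    _ = _ := by rw [card_powersetCard, hG, mul_comm]

theorem bollobas_card_le {ι : Type*} [Fintype ι] (C D : ι → Finset α)
    (hdisj : ∀ i, Disjoint (C i) (D i)) (hcross : ∀ i j, i ≠ j → (C i ∩ D j).Nonempty)
    {M : ℕ} (hM : ∀ i, (#(C i) + #(D i)).choose #(C i) ≤ M) : Fintype.card ι ≤ M := by
  set N := (Fintype.card α).factorial
  set E : ι → Finset (Equiv.Perm α) := fun i => {σ | ∀ x ∈ C i, ∀ y ∈ D i, σ x < σ y}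
  have hE : ((univ : Finset ι) : Set ι).PairwiseDisjoint E := by
    intro i _ j _ hij
    refine disjoint_left.2 fun σ hi hj => ?_
    obtain ⟨x, hx⟩ := hcross i j hij
    obtain ⟨y, hy⟩ := hcross j i hij.symm
    rw [mem_inter] at hx hy
    exact ((mem_filter.1 hi).2 x hx.1 y hy.2).not_gt ((mem_filter.1 hj).2 y hy.1 x hx.2)
  have hsum : ∑ i, #(E i) ≤ N := by
    rw [← card_biUnion hE]
    exact (card_le_univ _).trans_eq Fintype.card_perm
  have hmul : Fintype.card ι * N ≤ M * N :=
    calc Fintype.card ι * N = ∑ _i : ι, N := by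
          rw [sum_const, card_univ, smul_eq_mul]
      _ ≤ ∑ i, #(E i) * M := sum_le_sum fun i _ =>
          (factorial_card_le_card_filter_mul_choose (hdisj i)).trans
            (Nat.mul_le_mul_left _ (hM i))
      _ = (∑ i, #(E i)) * M := (sum_mul ..).symm
      _ ≤ M * N := by rw [mul_comm]; exact Nat.mul_le_mul_left _ hsum
  exact Nat.le_of_mul_le_mul_right hmul (Nat.factorial_pos _)

end SetPairs

/-- The `2`-dimension of a poset: the `p` of the theorem. -/
noncomputable def powersetDim (U : Type*) [PartialOrder U] : ℕ :=
  sInf {m : ℕ | Nonempty (U ↪o Set (Fin m))}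

section PowersetDim

variable {U : Type*} [PartialOrder U]

lemma powersetDim_le_card {β : Type*} [Fintype β] (g : U ↪o Set β) :
    powersetDim U ≤ Fintype.card β :=
  Nat.sInf_le ⟨g.trans (Fintype.equivFin β).toOrderIsoSet.toOrderEmbedding⟩

variable (U) in
lemma nonempty_orderEmbedding_set_fin_powersetDim [Finite U] :
    Nonempty (U ↪o Set (Fin (powersetDim U))) :=
  Nat.sInf_mem (s := {m : ℕ | Nonempty (U ↪o Set (Fin m))}) ⟨Nat.card U,
    ⟨(OrderEmbedding.ofMapLEIff Set.Iic fun _ _ => Set.Iic_subset_Iic).trans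
      (Finite.equivFin U).toOrderIsoSet.toOrderEmbedding⟩⟩

lemma powersetDim_le_card_sdiff [BoundedOrder U] {β : Type*} [DecidableEq β]
    (f : U ↪o Finset β) : powersetDim U ≤ #(f ⊤ \ f ⊥) := by
  rw [← Fintype.card_coe]
  refine powersetDim_le_card (OrderEmbedding.ofMapLEIff (fun u => {x | ↑x ∈ f u}) fun u v => ?_)
  refine ⟨fun h => f.le_iff_le.1 fun x hx => ?_, fun h x hx => f.monotone h hx⟩
  by_cases hbot : x ∈ f ⊥
  · exact f.monotone bot_le hbot
  · exact h (a := ⟨x, mem_sdiff.2 ⟨f.monotone le_top hx, hbot⟩⟩) hx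

end PowersetDim

section Copies

variable {ι U : Type*} [PartialOrder U]

lemma card_le_choose_of_sigma_orderEmbedding [Fintype ι] [BoundedOrder U] {α : Type*}
    [LinearOrder α] [Fintype α] (f : (Σ _ : ι, U) ↪o Finset α) :
    Fintype.card ι ≤
      (Fintype.card α - powersetDim U).choose ((Fintype.card α - powersetDim U) / 2) := by
  have hle : ∀ i, powersetDim U + #(f ⟨i, ⊥⟩) ≤ #(f ⟨i, ⊤⟩) := fun i => by
    have hsub : f ⟨i, ⊥⟩ ⊆ f ⟨i, ⊤⟩ := f.monotone (Sigma.mk_le_mk_iff.2 bot_le)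
    have hdim := powersetDim_le_card_sdiff
      (OrderEmbedding.ofMapLEIff (fun u => f ⟨i, u⟩) fun _ _ =>
        f.le_iff_le.trans Sigma.mk_le_mk_iff)
    simp only [OrderEmbedding.coe_ofMapLEIff, card_sdiff_of_subset hsub] at hdim
    have hcard := card_le_card hsub
    omega
  refine bollobas_card_le (fun i => f ⟨i, ⊥⟩) (fun i => (f ⟨i, ⊤⟩)ᶜ) (fun i => ?_)
    (fun i j hij => ?_) (fun i => ?_)
  · exact disjoint_compl_right_iff.2 (f.monotone (Sigma.mk_le_mk_iff.2 bot_le))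
  · have hnot : ¬ f ⟨i, ⊥⟩ ⊆ f ⟨j, ⊤⟩ := fun h =>
      hij (Sigma.le_def.1 (f.le_iff_le.1 h)).1
    obtain ⟨x, hxi, hxj⟩ := not_subset.1 hnot
    exact ⟨x, mem_inter.2 ⟨hxi, mem_compl.2 hxj⟩⟩
  · have hi := hle i
    have htop := card_le_univ (f ⟨i, ⊤⟩)
    rw [card_compl]
    exact (Nat.choose_le_choose _ (by omega)).trans (Nat.choose_le_middle _ _)

lemma nonempty_sigma_orderEmbedding_set_sum {α β : Type*} (g : U ↪o Set α) (A : ι → Set β)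
    (hA : ∀ i j, A i ⊆ A j → i = j) : Nonempty ((Σ _ : ι, U) ↪o Set (α ⊕ β)) := by
  refine ⟨OrderEmbedding.ofMapLEIff (fun x => Set.sumEquiv.symm (g x.2, A x.1)) ?_⟩
  rintro ⟨i, u⟩ ⟨j, v⟩
  simp only [OrderIso.le_iff_le, Prod.mk_le_mk, g.le_iff_le]
  constructor
  · rintro ⟨huv, hij⟩
    obtain rfl := hA i j hij
    exact Sigma.mk_le_mk_iff.2 huv
  · rintro ⟨_, _, _, h⟩
    exact ⟨h, le_rfl⟩

lemma nonempty_sigma_choose_orderEmbedding_set_fin {p n : ℕ} (g : U ↪o Set (Fin p))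
    (hn : p ≤ n) :
    Nonempty ((Σ _ : Fin ((n - p).choose ((n - p) / 2)), U) ↪o Set (Fin n)) := by
  let e : Fin ((n - p).choose ((n - p) / 2)) ≃ {s : Finset (Fin (n - p)) // #s = (n - p) / 2} :=
    (Fintype.equivFinOfCardEq (by simp [Fintype.card_finset_len])).symm
  obtain ⟨F⟩ := nonempty_sigma_orderEmbedding_set_sum g (fun i => ((e i).1 : Set (Fin (n - p))))
    fun i j h => e.injective <| Subtype.ext <|
      eq_of_subset_of_card_le (coe_subset.1 h) (by rw [(e i).2, (e j).2])
  exact ⟨F.trans (finSumFinEquiv.trans (finCongr (by omega))).toOrderIsoSet.toOrderEmbedding⟩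

end Copies

theorem stmt_12_general (U : Type*) [PartialOrder U] [Fintype U]
    [BoundedOrder U]
    (p : ℕ) (hp : p = sInf {p' : ℕ | Nonempty (U ↪o Set (Fin p'))})
    (n : ℕ) (hn : p ≤ n) :
    sSup {k : ℕ | Nonempty ((Σ _ : Fin k, U) ↪o Set (Fin n))}
      = (n - p).choose ((n - p) / 2) := by
  change p = powersetDim U at hp
  subst hp
  refine IsGreatest.csSup_eq ⟨?_, fun k ⟨f⟩ => ?_⟩
  · exact nonempty_sigma_choose_orderEmbedding_set_fin
      (nonempty_orderEmbedding_set_fin_powersetDim U).some hn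
  · simpa using card_le_choose_of_sigma_orderEmbedding
      (f.trans Fintype.finsetOrderIsoSet.symm.toOrderEmbedding)

/-- Sperner theorem for bounded posets: if `U` is a finite bounded poset and
`p = min {p' : U ↪o P([p'])}`, then for `n ≥ p`,
`Sp(U,n) = C(n-p, ⌊(n-p)/2⌋)`. -/
theorem stmt_12 (U : Type*) [PartialOrder U] [Fintype U] [Nonempty U]
    [BoundedOrder U]
    (p : ℕ) (hp : p = sInf {p' : ℕ | Nonempty (U ↪o Set (Fin p'))})
    (n : ℕ) (hn : p ≤ n) :
    sSup {k : ℕ | Nonempty ((Σ _ : Fin k, U) ↪o Set (Fin n))}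
      = (n - p).choose ((n - p) / 2) :=
  stmt_12_general U p hp n hn
end

section
/- Let U be a finite bounded poset with p = min {p' : U embeds into P([p'])}, and let k ≥ 1. Then Sp*(U,k) = p + B*(k), where Sp*(U,k) = min {n : k pairwise unrelated copies of U embed into P([n])} and B*(k) = min {n : k ≤ C(n, ⌊n/2⌋)}. -/
/-!
Upper bound: next to a copy of `U` in `P([p])`, tag the `i`-th copy with the `i`-th member of an
antichain of `k` middle-layer subsets of a disjoint ground set `[m]`, where `m = B*(k)`.

Lower bound: the `i`-th copy lies in the interval `[A i, C i]` between the images of `⊥` and `⊤`,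
so `|C i \ A i| ≥ p`, and the copies being unrelated means `A i ⊄ C j` for `i ≠ j`. The pairs
`(A i, (C i)ᶜ)` are then cross-intersecting, and Bollobás's inequality
`∑ 1 / C(|A i| + |B i|, |A i|) ≤ 1` with `|A i| + |(C i)ᶜ| ≤ n - p` gives the Griggs–Stahl–Trotter
bound `k ≤ C(n - p, ⌊(n - p) / 2⌋)`.
-/

open Finset

lemma Nat.succ_div_choose_eq (a b : ℕ) :
    ((b + 1 : ℕ) : ℚ) / (a + b).choose a = ((a + b + 1 : ℕ) : ℚ) / (a + b + 1).choose a := by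
  have h := Nat.choose_mul_succ_eq (a + b) a
  rw [show a + b + 1 - a = b + 1 by omega] at h
  rw [div_eq_div_iff (Nat.cast_pos.2 (Nat.choose_pos (by omega))).ne'
    (Nat.cast_pos.2 (Nat.choose_pos (by omega))).ne']
  exact_mod_cast by linarith [h]

section Bollobas

variable {α ι : Type*} [DecidableEq α]

lemma sum_sdiff_inv_choose_card_erase {A B G : Finset α} (hAB : Disjoint A B)
    (hG : A ∪ B ⊆ G) (hB : B.Nonempty) :
    ∑ x ∈ G \ A, ((#A + #(B.erase x)).choose #A : ℚ)⁻¹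
      = #G * ((#A + #B).choose #A : ℚ)⁻¹ := by
  obtain ⟨b, hb⟩ : ∃ b, #B = b + 1 := Nat.exists_eq_succ_of_ne_zero hB.card_pos.ne'
  have hsplit : G \ A = B ∪ G \ (A ∪ B) := by
    ext x
    have := @hG x
    have : x ∈ A → x ∉ B := fun h => disjoint_left.1 hAB h
    simp only [mem_sdiff, mem_union] at *
    tauto
  have hsum_B : ∑ x ∈ B, ((#A + #(B.erase x)).choose #A : ℚ)⁻¹
      = ((b + 1 : ℕ) : ℚ) / (#A + b).choose #A := by
    rw [sum_congr rfl fun x hx => by rw [card_erase_of_mem hx, hb, Nat.add_sub_cancel]]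
    simp [hb, div_eq_mul_inv]
  have hsum_rest : ∑ x ∈ G \ (A ∪ B), ((#A + #(B.erase x)).choose #A : ℚ)⁻¹
      = #(G \ (A ∪ B)) * ((#A + #B).choose #A : ℚ)⁻¹ := by
    rw [sum_congr rfl fun x hx => by
      rw [erase_eq_of_notMem fun h => (mem_sdiff.1 hx).2 (mem_union_right _ h)]]
    simp
  rw [hsplit, sum_union (disjoint_sdiff.mono_left subset_union_right), hsum_B, hsum_rest,
    Nat.succ_div_choose_eq, card_sdiff_of_subset hG, card_union_of_disjoint hAB, hb,
    Nat.cast_sub (by simpa [card_union_of_disjoint hAB, hb] using card_le_card hG)]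
  push_cast
  simp only [← add_assoc]
  ring

/- Induction on a ground set `G`: for `x ∈ G`, the pairs with `x ∉ A i`, with `x` deleted from
`B i`, still cross-intersect inside `G.erase x`; summing these inequalities over `x ∈ G` gives
`|G|` times the inequality for `G`. -/
theorem bollobas_sum_inv_choose_le_one (s : Finset ι) (A B : ι → Finset α)
    (hdisj : ∀ i ∈ s, Disjoint (A i) (B i))
    (hcross : ∀ i ∈ s, ∀ j ∈ s, i ≠ j → ¬Disjoint (A i) (B j)) :
    ∑ i ∈ s, ((#(A i) + #(B i)).choose #(A i) : ℚ)⁻¹ ≤ 1 := by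
  suffices h : ∀ G : Finset α, ∀ (s : Finset ι) (B : ι → Finset α), (∀ i ∈ s, A i ∪ B i ⊆ G) →
      (∀ i ∈ s, Disjoint (A i) (B i)) → (∀ i ∈ s, ∀ j ∈ s, i ≠ j → ¬Disjoint (A i) (B j)) →
      ∑ i ∈ s, ((#(A i) + #(B i)).choose #(A i) : ℚ)⁻¹ ≤ 1 from
    h _ s B (fun i hi => subset_biUnion_of_mem (fun i => A i ∪ B i) hi) hdisj hcross
  intro G
  induction G using Finset.strongInduction with | H G ih => ?_
  intro s B hG hdisj hcross
  by_cases hempty : ∃ i ∈ s, B i = ∅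
  · obtain ⟨i, hi, hBi⟩ := hempty
    have hs : s = {i} := eq_singleton_iff_unique_mem.2
      ⟨hi, fun j hj => by_contra fun hji => hcross j hj i hi hji (by simp [hBi])⟩
    simp [hs, hBi]
  push Not at hempty
  obtain rfl | ⟨i₀, hi₀⟩ := s.eq_empty_or_nonempty
  · simp
  have hG_pos : (0 : ℚ) < #G := by
    obtain ⟨x, hx⟩ := hempty i₀ hi₀
    exact_mod_cast card_pos.2 ⟨x, hG i₀ hi₀ (mem_union_right _ hx)⟩
  have hdelete : ∀ x ∈ G,
      ∑ i ∈ s with x ∉ A i, ((#(A i) + #((B i).erase x)).choose #(A i) : ℚ)⁻¹ ≤ 1 := by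
    intro x hx
    refine ih _ (erase_ssubset hx) _ (fun i => (B i).erase x) (fun i hi => ?_)
      (fun i hi => (hdisj i (mem_filter.1 hi).1).mono_right (erase_subset _ _))
      (fun i hi j hj hij hd => ?_)
    · obtain ⟨hi, hxA⟩ := mem_filter.1 hi
      intro y hy
      rw [mem_union, mem_erase] at hy
      refine mem_erase.2 ⟨?_, hG i hi (mem_union.2 ?_)⟩
      · rintro rfl
        tauto
      · tauto
    · obtain ⟨hi, hxA⟩ := mem_filter.1 hi
      refine hcross i hi j (mem_filter.1 hj).1 hij (disjoint_left.2 fun y hyA hyB => ?_)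
      exact disjoint_left.1 hd hyA (mem_erase.2 ⟨ne_of_mem_of_not_mem hyA hxA, hyB⟩)
  refine le_of_mul_le_mul_left ?_ hG_pos
  calc (#G : ℚ) * ∑ i ∈ s, ((#(A i) + #(B i)).choose #(A i) : ℚ)⁻¹
      = ∑ i ∈ s, ∑ x ∈ G \ A i, ((#(A i) + #((B i).erase x)).choose #(A i) : ℚ)⁻¹ := by
        rw [mul_sum]
        exact sum_congr rfl fun i hi =>
          (sum_sdiff_inv_choose_card_erase (hdisj i hi) (hG i hi) (hempty i hi)).symm
    _ = ∑ x ∈ G, ∑ i ∈ s with x ∉ A i, ((#(A i) + #((B i).erase x)).choose #(A i) : ℚ)⁻¹ :=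
        sum_comm' fun i x => by simp only [mem_sdiff, mem_filter]; tauto
    _ ≤ ∑ x ∈ G, 1 := sum_le_sum hdelete
    _ = #G * 1 := by simp

theorem card_le_choose_half_of_crossing (s : Finset ι) (A B : ι → Finset α)
    (hdisj : ∀ i ∈ s, Disjoint (A i) (B i))
    (hcross : ∀ i ∈ s, ∀ j ∈ s, i ≠ j → ¬Disjoint (A i) (B j))
    {m : ℕ} (hm : ∀ i ∈ s, #(A i) + #(B i) ≤ m) :
    #s ≤ m.choose (m / 2) := by
  have hpos : (0 : ℚ) < m.choose (m / 2) :=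
    Nat.cast_pos.2 (Nat.choose_pos (Nat.div_le_self m 2))
  have hterm : ∀ i ∈ s,
      ((m.choose (m / 2) : ℕ) : ℚ)⁻¹ ≤ ((#(A i) + #(B i)).choose #(A i) : ℚ)⁻¹ :=
    fun i hi => inv_anti₀ (Nat.cast_pos.2 (Nat.choose_pos le_self_add)) <| Nat.cast_le.2 <|
      (Nat.choose_le_choose _ (hm i hi)).trans (Nat.choose_le_middle _ _)
  have := (card_nsmul_le_sum s _ _ hterm).trans
    (bollobas_sum_inv_choose_le_one s A B hdisj hcross)
  rw [nsmul_eq_mul, ← div_eq_mul_inv, div_le_one hpos] at this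
  exact_mod_cast this

end Bollobas

section Embeddings

variable {U β γ : Type*} [PartialOrder U]

lemma OrderEmbedding.nonempty_set_fin_card [Fintype β] (e : U ↪o Set β) :
    Nonempty (U ↪o Set (Fin (Fintype.card β))) :=
  ⟨e.trans (Fintype.equivFin β).toOrderIsoSet.toOrderEmbedding⟩

lemma nonempty_orderEmbedding_set_fin_sInf [Fintype U] :
    Nonempty (U ↪o Set (Fin (sInf {p | Nonempty (U ↪o Set (Fin p))}))) :=
  Nat.sInf_mem (s := {p | Nonempty (U ↪o Set (Fin p))})
    ⟨_, (OrderEmbedding.ofMapLEIff Set.Iic fun _ _ => Set.Iic_subset_Iic).nonempty_set_fin_card⟩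

def OrderEmbedding.sigmaMk (ι : Type*) (i : ι) : U ↪o (Σ _ : ι, U) :=
  OrderEmbedding.ofMapLEIff (fun u : U => (⟨i, u⟩ : Σ _ : ι, U)) fun _ _ => Sigma.mk_le_mk_iff

def OrderEmbedding.restrictSdiff [BoundedOrder U] [DecidableEq β] (g : U ↪o Finset β) :
    U ↪o Set ↥(g ⊤ \ g ⊥) :=
  OrderEmbedding.ofMapLEIff (fun u => {x | ↑x ∈ g u}) fun u v => by
    refine ⟨fun h => g.le_iff_le.1 fun x hx => ?_, fun h x hx => g.monotone h hx⟩
    by_cases hx₀ : x ∈ g ⊥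
    · exact g.monotone bot_le hx₀
    · exact h (show (⟨x, mem_sdiff.2 ⟨g.monotone le_top hx, hx₀⟩⟩ : ↥(g ⊤ \ g ⊥))
        ∈ {x | ↑x ∈ g u} from hx)

lemma sInf_le_card_top_sdiff_bot [BoundedOrder U] [DecidableEq β] (g : U ↪o Finset β) :
    sInf {p | Nonempty (U ↪o Set (Fin p))} ≤ #(g ⊤ \ g ⊥) := by
  have := g.restrictSdiff.nonempty_set_fin_card
  rw [Fintype.card_coe] at this
  exact Nat.sInf_le this

def OrderEmbedding.sigmaSum {ι : Type*} (e : U ↪o Set β) (f : ι → Set γ)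
    (hf : ∀ i j, f i ⊆ f j → i = j) : (Σ _ : ι, U) ↪o Set (β ⊕ γ) :=
  OrderEmbedding.ofMapLEIff (fun x : Σ _ : ι, U => Set.sumEquiv.symm (e x.2, f x.1)) <| by
    rintro ⟨i, u⟩ ⟨j, v⟩
    dsimp only
    rw [Set.sumEquiv.symm.le_iff_le, Prod.mk_le_mk, e.le_iff_le]
    constructor
    · rintro ⟨huv, hij⟩
      obtain rfl := hf i j hij
      exact (OrderEmbedding.sigmaMk ι i).le_iff_le.2 huv
    · intro h
      obtain rfl : i = j := (Sigma.le_def.1 h).1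
      exact ⟨(OrderEmbedding.sigmaMk ι i).le_iff_le.1 h, le_rfl⟩

lemma nonempty_sigma_orderEmbedding_set_fin_add {p k m : ℕ} (e : U ↪o Set (Fin p))
    (hm : k ≤ m.choose (m / 2)) : Nonempty ((Σ _ : Fin k, U) ↪o Set (Fin (p + m))) := by
  obtain ⟨f⟩ : Nonempty (Fin k ↪ powersetCard (m / 2) (univ : Finset (Fin m))) :=
    Function.Embedding.nonempty_of_card_le (by simpa using hm)
  have hf : ∀ i j, ((f i : Finset (Fin m)) : Set (Fin m)) ⊆ f j → i = j := fun i j h =>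
    f.injective <| Subtype.ext <| eq_of_subset_of_card_le (coe_subset.1 h) <| by
      rw [(mem_powersetCard.1 (f i).2).2, (mem_powersetCard.1 (f j).2).2]
  exact ⟨(e.sigmaSum _ hf).trans finSumFinEquiv.toOrderIsoSet.toOrderEmbedding⟩

theorem sInf_add_sInf_le_of_sigma_orderEmbedding [BoundedOrder U] {k n : ℕ} (hk : 1 ≤ k)
    (g : (Σ _ : Fin k, U) ↪o Set (Fin n)) :
    sInf {p | Nonempty (U ↪o Set (Fin p))} + sInf {m | k ≤ m.choose (m / 2)} ≤ n := by
  classical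
  set p := sInf {p | Nonempty (U ↪o Set (Fin p))}
  let G : (Σ _ : Fin k, U) ↪o Finset (Fin n) :=
    g.trans (Fintype.finsetOrderIsoSet (α := Fin n)).symm.toOrderEmbedding
  have hp : ∀ i, p ≤ #(G ⟨i, ⊤⟩ \ G ⟨i, ⊥⟩) := fun i =>
    sInf_le_card_top_sdiff_bot ((OrderEmbedding.sigmaMk _ i).trans G)
  have hsub : ∀ i, G ⟨i, ⊥⟩ ⊆ G ⟨i, ⊤⟩ := fun i => G.monotone (Sigma.mk_le_mk_iff.2 bot_le)
  have hcard : ∀ i ∈ univ, #(G ⟨i, ⊥⟩) + #(G ⟨i, ⊤⟩)ᶜ ≤ n - p := fun i _ => by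
    have := card_sdiff_add_card_eq_card (hsub i)
    have := card_compl (G ⟨i, ⊤⟩)
    have := card_le_univ (G ⟨i, ⊤⟩)
    have := hp i
    simp only [Fintype.card_fin] at *
    omega
  have hkp : k ≤ (n - p).choose ((n - p) / 2) := by
    simpa using card_le_choose_half_of_crossing univ (fun i => G ⟨i, ⊥⟩) (fun i => (G ⟨i, ⊤⟩)ᶜ)
      (fun i _ => disjoint_compl_right.mono_left (hsub i))
      (fun i _ j _ hij hd =>
        hij (Sigma.le_def.1 (G.le_iff_le.1 (disjoint_compl_right_iff.1 hd))).1)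
      hcard
  have hpn : p ≤ n := (hp ⟨0, hk⟩).trans ((card_le_univ _).trans (by simp))
  have := Nat.sInf_le (s := {m | k ≤ m.choose (m / 2)}) hkp
  omega

end Embeddings

theorem stmt_13_general (U : Type*) [PartialOrder U] [Fintype U]
    [BoundedOrder U]
    (p : ℕ) (hp : p = sInf {p' : ℕ | Nonempty (U ↪o Set (Fin p'))})
    (k : ℕ) (hk : 1 ≤ k) :
    sInf {n : ℕ | Nonempty ((Σ _ : Fin k, U) ↪o Set (Fin n))}
      = p + sInf {n : ℕ | k ≤ n.choose (n / 2)} := by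
  obtain ⟨e⟩ : Nonempty (U ↪o Set (Fin p)) := hp ▸ nonempty_orderEmbedding_set_fin_sInf
  have hmiddle : k ≤ (sInf {n : ℕ | k ≤ n.choose (n / 2)}).choose
      (sInf {n : ℕ | k ≤ n.choose (n / 2)} / 2) :=
    Nat.sInf_mem (s := {n : ℕ | k ≤ n.choose (n / 2)}) ⟨k, show k ≤ k.choose (k / 2) from
      (Nat.choose_one_right k).symm.le.trans (Nat.choose_le_middle 1 k)⟩
  have hcopies := nonempty_sigma_orderEmbedding_set_fin_add e hmiddle
  refine le_antisymm (Nat.sInf_le hcopies) ?_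
  obtain ⟨g⟩ := Nat.sInf_mem
    (s := {n : ℕ | Nonempty ((Σ _ : Fin k, U) ↪o Set (Fin n))}) ⟨_, hcopies⟩
  exact hp ▸ sInf_add_sInf_le_of_sigma_orderEmbedding hk g

/-- For a finite bounded poset `U` with `p = min {p' : U ↪o P([p'])}` and
`k ≥ 1`:  `Sp*(U,k) = p + B*(k)`, where `Sp*(U,k)` is the least `n` such that
`k` unrelated copies of `U` embed into `P([n])` and
`B*(k) = min {n : k ≤ C(n, ⌊n/2⌋)}`. -/
theorem stmt_13 (U : Type*) [PartialOrder U] [Fintype U] [Nonempty U]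
    [BoundedOrder U]
    (p : ℕ) (hp : p = sInf {p' : ℕ | Nonempty (U ↪o Set (Fin p'))})
    (k : ℕ) (hk : 1 ≤ k) :
    sInf {n : ℕ | Nonempty ((Σ _ : Fin k, U) ↪o Set (Fin n))}
      = p + sInf {n : ℕ | k ≤ n.choose (n / 2)} :=
  stmt_13_general U p hp k hk
end

section
/- For distinct subsets X, Y of [n] that are comparable-free (X ⊄ Y and Y ⊄ X and X ≠ Y), the sets Γ(X) and Γ(Y) of permutations are disjoint, where Γ(X) = {π ∈ S_n : the initial segment of π of length lpos(X,π) equals X}, lpos(X,π) being the last position in π occupied by an element of X. -/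
/-- The last position of a nonempty set `X` in the permutation `π`:
`lpos(X,π) = max {m : π m ∈ X}`. -/
def lastPos {n : ℕ} (X : Finset (Fin n)) (π : Equiv.Perm (Fin n))
    (hX : X.Nonempty) : Fin n :=
  (Finset.univ.filter fun m => π m ∈ X).max' (by
    obtain ⟨a, ha⟩ := hX
    exact ⟨π.symm a, by simp [Finset.mem_filter, ha]⟩)

/-- `π ∈ Γ(X)`: the initial segment of `π` up to the last position of `X`
equals `X`. -/
def inGamma {n : ℕ} (X : Finset (Fin n)) (π : Equiv.Perm (Fin n))
    (hX : X.Nonempty) : Prop :=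
  (Finset.univ.filter fun m => m ≤ lastPos X π hX).image π = X

lemma seg_mono {n : ℕ} (π : Equiv.Perm (Fin n)) {a b : Fin n} (h : a ≤ b) :
    (Finset.univ.filter fun m => m ≤ a).image π ⊆
      (Finset.univ.filter fun m => m ≤ b).image π :=
  Finset.image_subset_image (fun m hm => by
    simp only [Finset.mem_filter, Finset.mem_univ, true_and] at *
    exact le_trans hm h)

/-- For distinct, incomparable nonempty `X, Y ⊆ [n]`, the permutation sets
`Γ(X)` and `Γ(Y)` are disjoint. -/
theorem stmt_14 {n : ℕ} (X Y : Finset (Fin n)) (hX : X.Nonempty)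
    (hY : Y.Nonempty) (hne : X ≠ Y) (hXY : ¬ X ⊆ Y) (hYX : ¬ Y ⊆ X) :
    ∀ π : Equiv.Perm (Fin n), ¬ (inGamma X π hX ∧ inGamma Y π hY) := by
  rintro π ⟨hx, hy⟩
  rcases le_total (lastPos X π hX) (lastPos Y π hY) with h | h
  · exact hXY (hx ▸ hy ▸ seg_mono π h)
  · exact hYX (hy ▸ hx ▸ seg_mono π h)
end

section
/- Let n ≥ 2 and define g₀(x) = (n+2x)·x!·(n−1−x)! for integer x with 1 ≤ x ≤ n−1. Then g₀ attains its minimum on {1,…,n−1} at x = ⌊(n−1)/2⌋. -/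
private def g (n x : ℕ) : ℕ := (n + 2 * x) * x.factorial * (n - 1 - x).factorial

private lemma g_step_le (n x : ℕ) (hn : 2 ≤ n) (hx : x + 1 ≤ n - 1)
    (h : (n - 1) / 2 ≤ x) : g n x ≤ g n (x + 1) := by
  obtain ⟨d, hd⟩ : ∃ d, n - 1 - x = d + 1 := ⟨n - 2 - x, by omega⟩
  have hn' : n = x + 2 + d := by omega
  have hxd : d ≤ x := by omega
  unfold g
  rw [hd]
  have h2 : n - 1 - (x + 1) = d := by omega
  rw [h2, Nat.factorial_succ, Nat.factorial_succ]
  have key : (n + 2 * x) * (d + 1) ≤ (n + 2 * (x + 1)) * (x + 1) := by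
    subst hn'; nlinarith
  calc (n + 2 * x) * x.factorial * ((d + 1) * d.factorial)
      = ((n + 2 * x) * (d + 1)) * (x.factorial * d.factorial) := by ring
    _ ≤ ((n + 2 * (x + 1)) * (x + 1)) * (x.factorial * d.factorial) :=
        Nat.mul_le_mul_right _ key
    _ = (n + 2 * (x + 1)) * ((x + 1) * x.factorial) * d.factorial := by ring

private lemma g_step_ge (n x : ℕ) (hn : 2 ≤ n) (hx : x + 1 ≤ (n - 1) / 2) :
    g n (x + 1) ≤ g n x := by
  have hx' : x + 1 ≤ n - 1 := le_trans hx (Nat.div_le_self _ _)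
  obtain ⟨d, hd⟩ : ∃ d, n - 1 - x = d + 1 := ⟨n - 2 - x, by omega⟩
  have hn' : n = x + 2 + d := by omega
  have hxd : x + 2 ≤ d + 1 := by omega
  unfold g
  rw [hd]
  have h2 : n - 1 - (x + 1) = d := by omega
  rw [h2, Nat.factorial_succ, Nat.factorial_succ]
  have key : (n + 2 * (x + 1)) * (x + 1) ≤ (n + 2 * x) * (d + 1) := by
    subst hn'; nlinarith
  calc (n + 2 * (x + 1)) * ((x + 1) * x.factorial) * d.factorial
      = ((n + 2 * (x + 1)) * (x + 1)) * (x.factorial * d.factorial) := by ring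
    _ ≤ ((n + 2 * x) * (d + 1)) * (x.factorial * d.factorial) :=
        Nat.mul_le_mul_right _ key
    _ = (n + 2 * x) * x.factorial * ((d + 1) * d.factorial) := by ring

private lemma g_min_above (n : ℕ) (hn : 2 ≤ n) :
    ∀ x, (n - 1) / 2 ≤ x → x ≤ n - 1 → g n ((n - 1) / 2) ≤ g n x := by
  intro x
  induction x with
  | zero => intro h1 _; interval_cases h : (n - 1) / 2 <;> simp
  | succ k ih =>
    intro h1 h2
    rcases Nat.lt_or_ge ((n - 1) / 2) (k + 1) with hlt | hge
    · exact le_trans (ih (by omega) (by omega)) (g_step_le n k hn h2 (by omega))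
    · have : (n - 1) / 2 = k + 1 := by omega
      rw [this]
  termination_by x => x

private lemma g_min_below (n : ℕ) (hn : 2 ≤ n) :
    ∀ j x, x + j = (n - 1) / 2 → g n ((n - 1) / 2) ≤ g n x := by
  intro j
  induction j with
  | zero => intro x hx; simp at hx; rw [hx]
  | succ k ih =>
    intro x hx
    exact le_trans (ih (x + 1) (by omega)) (g_step_ge n x hn (by omega))

/-- For `n ≥ 2`, the function `g₀(x) = (n+2x)·x!·(n−1−x)!` attains its minimum
on `{1,…,n−1}` at `x = ⌊(n−1)/2⌋`. -/
theorem stmt_16 (n : ℕ) (hn : 2 ≤ n) :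
    ∀ x : ℕ, 1 ≤ x → x ≤ n - 1 →
      (n + 2 * ((n - 1) / 2)) * ((n - 1) / 2).factorial
          * (n - 1 - (n - 1) / 2).factorial
        ≤ (n + 2 * x) * x.factorial * (n - 1 - x).factorial := by
  intro x hx1 hx2
  have : g n ((n - 1) / 2) ≤ g n x := by
    rcases le_or_gt ((n - 1) / 2) x with h | h
    · exact g_min_above n hn x h hx2
    · exact g_min_below n hn ((n - 1) / 2 - x) x (by omega)
  simpa [g] using this
end

section
/- For n ≥ 3, the maximum number Sp(W,n) of pairwise unrelated copies of the 4-element poset W (one bottom element below three pairwise incomparable maximal elements) in the powerset lattice of [n] is at most ⌊ n/(3n−2−2⌊n/2⌋) · C(n−1, ⌊(n−1)/2⌋) ⌋. -/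
/-- The 4-element poset `W`: a bottom element (`none`) below three pairwise
incomparable maximal elements (`some 0`, `some 1`, `some 2`). -/
def WPoset : Type := Option (Fin 3)

instance : PartialOrder WPoset where
  le x y := x = none ∨ x = y
  le_refl x := Or.inr rfl
  le_trans x y z h₁ h₂ := by
    rcases h₁ with h | h
    · exact Or.inl h
    · subst h; exact h₂
  le_antisymm x y h₁ h₂ := by
    rcases h₁ with h | h
    · rcases h₂ with g | g
      · exact h.trans g.symm
      · exact g.symm
    · exact h

/-!
A permutation `σ` of `Fin n` encodes the maximal chain `∅ ⊂ σ{0} ⊂ σ{0,1} ⊂ ⋯` of subsets of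
`Fin n`; it passes through a given `a`-set for exactly `a! (n-a)!` of the `n!` permutations. Sets
from different copies of `W` are incomparable, so no chain meets two copies. In a copy with bottom
of size `a` and tops of sizes `b₀, b₁, b₂` no chain meets two tops, so the copy is met by at least
`a! (n-a)! + ∑ⱼ (bⱼ! (n-bⱼ)! - a! (bⱼ-a)! (n-bⱼ)!)` chains, the mean over `j` of
`a! (n-a)! + 3 (bⱼ! (n-bⱼ)! - a! (bⱼ-a)! (n-bⱼ)!)`. With `m = ⌊(n-1)/2⌋`, each of these is at least
`(n + 2m) n! / (n C(n-1, m))`: moving `b` to `max (a+1) ⌊n/2⌋`, and then `a` up to `⌊n/2⌋ - 1`,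
only lowers it, and for `b = a + 1` it equals `(n + 2a) a! (n-a-1)!`, which is compared with the
middle binomial coefficient. Summing over the `k` copies gives `k (n + 2m) ≤ n C(n-1, m)`, and
`3n - 2 - 2⌊n/2⌋ = n + 2m`.
-/

open Finset Nat

section PermCount
variable {α ι : Type*} [Fintype α] [DecidableEq α] [DecidableEq ι]

omit [DecidableEq α] in
theorem exists_perm_comp_eq {f g : α → ι}
    (h : ∀ i, Fintype.card {a // f a = i} = Fintype.card {a // g a = i}) :
    ∃ σ : Equiv.Perm α, g ∘ σ = f :=
  ⟨(Equiv.sigmaFiberEquiv f).symm.trans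
      ((Equiv.sigmaCongrRight fun i => Fintype.equivOfCardEq (h i)).trans
        (Equiv.sigmaFiberEquiv g)),
    funext fun a => (Fintype.equivOfCardEq (h (f a)) ⟨a, rfl⟩).2⟩

theorem card_perm_comp_eq_eq_card_stabilizer {f g : α → ι} {σ₀ : Equiv.Perm α}
    (h₀ : g ∘ σ₀ = f) :
    Fintype.card {σ : Equiv.Perm α // g ∘ σ = f}
      = Fintype.card {τ : Equiv.Perm α // f ∘ τ = f} := by
  subst h₀
  exact Fintype.card_congr
    { toFun σ := ⟨σ₀⁻¹ * σ.1, funext fun a => by simpa using congrFun σ.2 a⟩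
      invFun τ := ⟨σ₀ * τ.1, funext fun a => congrFun τ.2 a⟩
      left_inv σ := by simp
      right_inv τ := by simp }

variable [Fintype ι]

theorem card_perm_comp_eq {f g : α → ι}
    (h : ∀ i, Fintype.card {a // f a = i} = Fintype.card {a // g a = i}) :
    Fintype.card {σ : Equiv.Perm α // g ∘ σ = f} = ∏ i, (Fintype.card {a // f a = i})! := by
  obtain ⟨σ₀, h₀⟩ := exists_perm_comp_eq h
  rw [card_perm_comp_eq_eq_card_stabilizer h₀, DomMulAct.stabilizer_card]

theorem card_perm_comp_eq_le (f g : α → ι) :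
    Fintype.card {σ : Equiv.Perm α // g ∘ σ = f} ≤ ∏ i, (Fintype.card {a // f a = i})! := by
  rcases isEmpty_or_nonempty {σ : Equiv.Perm α // g ∘ σ = f} with h | ⟨σ₀, h₀⟩
  · simp
  · rw [card_perm_comp_eq_eq_card_stabilizer h₀, DomMulAct.stabilizer_card]

def permsMapping (S A : Finset α) : Finset (Equiv.Perm α) := {σ | ∀ x, σ x ∈ A ↔ x ∈ S}

theorem subset_of_mem_permsMapping {S T A B : Finset α} {σ : Equiv.Perm α}
    (hA : σ ∈ permsMapping S A) (hB : σ ∈ permsMapping T B) (hST : S ⊆ T) : A ⊆ B := by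
  simp only [permsMapping, mem_filter_univ] at hA hB
  intro y hy
  rw [← σ.apply_symm_apply y] at hy ⊢
  exact (hB _).2 (hST ((hA _).1 hy))

theorem card_permsMapping {S A : Finset α} (h : #S = #A) :
    #(permsMapping S A) = (#S)! * (Fintype.card α - #S)! := by
  rw [permsMapping, ← Fintype.card_subtype]
  refine (Fintype.card_congr (Equiv.subtypeEquivRight fun σ : Equiv.Perm α =>
    (show (∀ x, σ x ∈ A ↔ x ∈ S) ↔ (fun y => decide (y ∈ A)) ∘ σ = fun x => decide (x ∈ S) by
      simp [funext_iff]))).trans ?_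
  rw [card_perm_comp_eq (by rintro (_ | _) <;> simp [Fintype.card_subtype_compl, h])]
  simp [Fintype.card_subtype_compl]

theorem card_permsMapping_inter_le {S T A B : Finset α} (hST : S ⊆ T) :
    #(permsMapping S A ∩ permsMapping T B) ≤ (#S)! * (#T - #S)! * (Fintype.card α - #T)! := by
  have h₁ : ({x | x ∈ S ∧ x ∈ T} : Finset α) = S := by ext; simpa using fun hx => hST hx
  have h₂ : ({x | x ∈ S ∧ x ∉ T} : Finset α) = ∅ := by ext; simpa using fun hx => hST hx
  have h₃ : ({x | x ∉ S ∧ x ∈ T} : Finset α) = T \ S := by ext; simp [and_comm]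
  have h₄ : ({x | x ∉ S ∧ x ∉ T} : Finset α) = Tᶜ := by
    ext; simpa using fun hx hS => hx (hST hS)
  calc #(permsMapping S A ∩ permsMapping T B)
      ≤ Fintype.card {σ : Equiv.Perm α // (fun y => (decide (y ∈ A), decide (y ∈ B))) ∘ σ
          = fun x => (decide (x ∈ S), decide (x ∈ T))} := by
        rw [← Fintype.card_coe]
        refine Fintype.card_le_of_embedding (Equiv.subtypeEquivRight fun σ => ?_).toEmbedding
        simp [permsMapping, funext_iff, forall_and]
    _ ≤ _ := card_perm_comp_eq_le _ _
    _ = _ := by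
        simp [Fintype.prod_prod_type, Fintype.card_subtype, h₁, h₂, h₃, h₄,
          card_sdiff_of_subset hST, card_compl]
        ring

end PermCount

/-- The number of maximal chains through a given `b`-set that avoid a given `a`-subset of it. -/
def upperOnlyChainCount (n a b : ℕ) : ℤ := b ! * (n - b)! - a ! * (b - a)! * (n - b)!

theorem upperOnlyChainCount_le_succ {n a b : ℕ} (hab : a ≤ b) (hb : n ≤ 2 * b + 1)
    (hbn : b < n) :
    upperOnlyChainCount n a b ≤ upperOnlyChainCount n a (b + 1) := by
  obtain ⟨d, rfl⟩ := Nat.exists_eq_add_of_le hab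
  obtain ⟨c, rfl⟩ : ∃ c, n = a + d + c + 1 := ⟨n - (a + d) - 1, by omega⟩
  have hK : 1 ≤ (a + d).choose d := Nat.choose_pos (by omega)
  simp only [upperOnlyChainCount, show a + d + c + 1 - (a + d) = c + 1 by omega,
    show a + d + c + 1 - (a + d + 1) = c by omega, show a + d + 1 - a = d + 1 by omega,
    show a + d - a = d by omega, ← add_choose_mul_factorial_mul_factorial a d,
    factorial_succ]
  have key : ((c + 1) * (a + d).choose d - (c + 1) : ℤ)
      ≤ (a + d + 1) * (a + d).choose d - (d + 1) := by
    have : (c : ℤ) ≤ a + d := by omega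
    have : (1 : ℤ) ≤ (a + d).choose d := by exact_mod_cast hK
    nlinarith
  push_cast
  linear_combination (a ! * d ! * c ! : ℤ) * key

theorem upperOnlyChainCount_succ_le {n a b : ℕ} (hab : a < b) (hbn : 2 * b + 2 ≤ n) :
    upperOnlyChainCount n a (b + 1) ≤ upperOnlyChainCount n a b := by
  obtain ⟨d, rfl⟩ := Nat.exists_eq_add_of_le hab.le
  obtain ⟨c, rfl⟩ : ∃ c, n = a + d + c + 1 := ⟨n - (a + d) - 1, by omega⟩
  have hK : a + 1 ≤ (a + d).choose d := by
    rw [← choose_symm_add, ← choose_succ_self_right a]; exact choose_le_choose a (by omega)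
  simp only [upperOnlyChainCount, show a + d + c + 1 - (a + d) = c + 1 by omega,
    show a + d + c + 1 - (a + d + 1) = c by omega, show a + d + 1 - a = d + 1 by omega,
    show a + d - a = d by omega, ← add_choose_mul_factorial_mul_factorial a d, factorial_succ]
  have key : ((a + d + 1) * (a + d).choose d - (d + 1) : ℤ)
      ≤ (c + 1) * (a + d).choose d - (c + 1) := by
    have : (a : ℤ) + d + 1 ≤ c := by omega
    have : (a : ℤ) + 1 ≤ (a + d).choose d := by exact_mod_cast hK
    nlinarith
  push_cast
  linear_combination (a ! * d ! * c ! : ℤ) * key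

theorem upperOnlyChainCount_max_le {n a b : ℕ} (hab : a < b) (hbn : b ≤ n) :
    upperOnlyChainCount n a (max (a + 1) (n / 2)) ≤ upperOnlyChainCount n a b := by
  have hup : MonotoneOn (upperOnlyChainCount n a) (Set.Icc (max a (n / 2)) n) :=
    monotoneOn_of_le_add_one Set.ordConnected_Icc fun b _ hb hb' => by
      obtain ⟨hab, hnb⟩ := max_le_iff.mp hb.1
      exact upperOnlyChainCount_le_succ hab (by omega) (by simp at hb'; omega)
  have hdown : AntitoneOn (upperOnlyChainCount n a) (Set.Icc (a + 1) (n / 2)) :=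
    antitoneOn_of_add_one_le Set.ordConnected_Icc fun b _ hb hb' =>
      upperOnlyChainCount_succ_le hb.1 (by simp at hb'; omega)
  rcases le_total (n / 2) b with h | h
  · exact hup (by simp; omega) (by simp; omega) (by omega)
  · exact hdown (by simp; omega) (by simp; omega) (by omega)

/-- A lower bound for the number of maximal chains meeting a copy of `W` whose bottom has size `a`
and whose three tops have size `b`. -/
def wChainCount (n a b : ℕ) : ℤ := a ! * (n - a)! + 3 * upperOnlyChainCount n a b

theorem wChainCount_succ_le {n a b : ℕ} (hab : a + 1 < b) (hbn : 2 * b ≤ n) :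
    wChainCount n (a + 1) b ≤ wChainCount n a b := by
  obtain ⟨p, rfl⟩ : ∃ p, b = a + p + 1 := ⟨b - a - 1, by omega⟩
  obtain ⟨q, rfl⟩ : ∃ q, n = a + p + 1 + q := ⟨n - (a + p + 1), by omega⟩
  have hL : q + 1 ≤ (p + q).choose q := by
    rw [← choose_succ_self_right q]; exact choose_le_choose q (by omega)
  simp only [wChainCount, upperOnlyChainCount, show a + p + 1 + q - a = p + q + 1 by omega,
    show a + p + 1 + q - (a + 1) = p + q by omega, show a + p + 1 - a = p + 1 by omega,
    show a + p + 1 - (a + 1) = p by omega, show a + p + 1 + q - (a + p + 1) = q by omega,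
    factorial_succ, ← add_choose_mul_factorial_mul_factorial p q]
  have key : ((a + 1) * (p + q).choose q - 3 * (a + 1) : ℤ)
      ≤ (p + q + 1) * (p + q).choose q - 3 * (p + 1) := by
    have : (a : ℤ) + p + 1 ≤ q := by omega
    have : (q : ℤ) + 1 ≤ (p + q).choose q := by exact_mod_cast hL
    nlinarith
  push_cast
  linear_combination (a ! * p ! * q ! : ℤ) * key

theorem wChainCount_self_succ {n a : ℕ} (ha : a < n) :
    wChainCount n a (a + 1) = (n + 2 * a) * a ! * (n - (a + 1))! := by
  obtain ⟨c, rfl⟩ : ∃ c, n = a + 1 + c := ⟨n - (a + 1), by omega⟩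
  simp only [wChainCount, upperOnlyChainCount, show a + 1 + c - a = c + 1 by omega,
    show a + 1 + c - (a + 1) = c by omega, show a + 1 - a = 1 by omega, factorial_succ]
  push_cast
  ring

theorem mul_choose_le_mul_choose_middle {n a : ℕ} (ha : a < n) (hna : n / 2 ≤ a + 1) :
    (n + 2 * ((n - 1) / 2)) * (n - 1).choose a ≤ (n + 2 * a) * (n - 1).choose ((n - 1) / 2) := by
  rcases le_or_gt ((n - 1) / 2) a with h | h
  · exact Nat.mul_le_mul (by omega) (choose_le_middle a (n - 1))
  · obtain rfl : n = 2 * a + 3 := by omega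
    have hsucc := choose_succ_right_eq (2 * a + 2) a
    rw [show 2 * a + 2 - a = a + 2 by omega] at hsucc
    rw [show (2 * a + 3 - 1) / 2 = a + 1 by omega, show 2 * a + 3 - 1 = 2 * a + 2 by omega]
    nlinarith

theorem le_mul_wChainCount_self_succ {n a : ℕ} (ha : a < n) (hna : n / 2 ≤ a + 1) :
    (((n + 2 * ((n - 1) / 2)) * n ! : ℕ) : ℤ)
      ≤ (n * (n - 1).choose ((n - 1) / 2) : ℕ) * wChainCount n a (a + 1) := by
  rw [wChainCount_self_succ ha]
  have hfac : n ! = n * ((n - 1).choose a * a ! * (n - (a + 1))!) := by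
    rw [show n - (a + 1) = n - 1 - a by omega, choose_mul_factorial_mul_factorial (by omega),
      mul_factorial_pred (by omega)]
  have hle : (n + 2 * ((n - 1) / 2)) * n !
      ≤ n * (n - 1).choose ((n - 1) / 2) * ((n + 2 * a) * a ! * (n - (a + 1))!) :=
    calc (n + 2 * ((n - 1) / 2)) * n !
        = (n + 2 * ((n - 1) / 2)) * (n - 1).choose a * (n * (a ! * (n - (a + 1))!)) := by
          rw [hfac]; ring
      _ ≤ (n + 2 * a) * (n - 1).choose ((n - 1) / 2) * (n * (a ! * (n - (a + 1))!)) :=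
          Nat.mul_le_mul_right _ (mul_choose_le_mul_choose_middle ha hna)
      _ = _ := by ring
  exact_mod_cast hle

theorem le_mul_wChainCount {n a b : ℕ} (hab : a < b) (hbn : b ≤ n) :
    (((n + 2 * ((n - 1) / 2)) * n ! : ℕ) : ℤ)
      ≤ (n * (n - 1).choose ((n - 1) / 2) : ℕ) * wChainCount n a b := by
  set a' := max a (n / 2 - 1)
  have hbot : wChainCount n a' (a' + 1) ≤ wChainCount n a (max (a + 1) (n / 2)) := by
    rcases le_or_gt (n / 2) (a + 1) with h | h
    · rw [show a' = a by omega, show max (a + 1) (n / 2) = a + 1 by omega]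
    · have hanti : AntitoneOn (wChainCount n · (n / 2)) (Set.Iic (n / 2 - 1)) :=
        antitoneOn_of_add_one_le Set.ordConnected_Iic fun a _ _ ha =>
          wChainCount_succ_le (by simp at ha; omega) (by omega)
      rw [show a' + 1 = n / 2 by omega, show max (a + 1) (n / 2) = n / 2 by omega]
      exact hanti (by simp; omega) (show a' ≤ n / 2 - 1 from max_le (by omega) le_rfl)
        (le_max_left _ _)
  have htop : wChainCount n a (max (a + 1) (n / 2)) ≤ wChainCount n a b := by
    have := upperOnlyChainCount_max_le hab hbn
    simp only [wChainCount]; linarith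
  calc _ ≤ (n * (n - 1).choose ((n - 1) / 2) : ℕ) * wChainCount n a' (a' + 1) :=
        le_mul_wChainCount_self_succ (by omega) (by omega)
    _ ≤ _ := by gcongr; exact hbot.trans htop

section MaximalChains
variable {n : ℕ}

/-- Permutations `σ` with `σ {0, …, #A - 1} = A`, i.e. whose maximal chain passes through `A`. -/
def permsThrough (A : Finset (Fin n)) : Finset (Equiv.Perm (Fin n)) :=
  permsMapping {x | (x : ℕ) < #A} A

theorem subset_of_mem_permsThrough {A B : Finset (Fin n)} {σ : Equiv.Perm (Fin n)}
    (hA : σ ∈ permsThrough A) (hB : σ ∈ permsThrough B) (h : #A ≤ #B) : A ⊆ B :=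
  subset_of_mem_permsMapping hA hB fun x hx => by simp only [mem_filter_univ] at *; omega

theorem disjoint_permsThrough {A B : Finset (Fin n)} (hAB : ¬A ⊆ B) (hBA : ¬B ⊆ A) :
    Disjoint (permsThrough A) (permsThrough B) :=
  disjoint_left.2 fun _ hA hB => (le_total #A #B).elim
    (fun h => hAB (subset_of_mem_permsThrough hA hB h))
    (fun h => hBA (subset_of_mem_permsThrough hB hA h))

theorem card_filter_val_lt_card (A : Finset (Fin n)) :
    #({x | (x : ℕ) < #A} : Finset (Fin n)) = #A := by
  rw [Fin.card_filter_val_lt, min_eq_right (by simpa using card_le_univ A)]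

theorem card_permsThrough (A : Finset (Fin n)) : #(permsThrough A) = (#A)! * (n - #A)! := by
  rw [permsThrough, card_permsMapping (card_filter_val_lt_card A), card_filter_val_lt_card,
    Fintype.card_fin]

theorem card_permsThrough_inter_le {A B : Finset (Fin n)} (hAB : A ⊆ B) :
    #(permsThrough A ∩ permsThrough B) ≤ (#A)! * (#B - #A)! * (n - #B)! := by
  have hseg : ({x | (x : ℕ) < #A} : Finset (Fin n)) ⊆ ({x | (x : ℕ) < #B} : Finset (Fin n)) :=
    fun x hx => by simp only [mem_filter_univ] at *; have := card_le_card hAB; omega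
  have := card_permsMapping_inter_le (A := A) (B := B) hseg
  rwa [card_filter_val_lt_card, card_filter_val_lt_card, Fintype.card_fin] at this

theorem le_card_permsThrough_union {ι : Type*} [Fintype ι] (Z : Finset (Fin n))
    (C : ι → Finset (Fin n)) (hZC : ∀ j, Z ⊆ C j) (hC : Pairwise fun j j' => ¬C j ⊆ C j') :
    ((#Z)! * (n - #Z)! : ℕ) + ∑ j, upperOnlyChainCount n #Z #(C j)
      ≤ #(permsThrough Z ∪ univ.biUnion fun j => permsThrough (C j)) := by
  have htops : #(univ.biUnion fun j => permsThrough (C j)) = ∑ j, #(permsThrough (C j)) :=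
    card_biUnion fun j _ j' _ hne => disjoint_permsThrough (hC hne) (hC hne.symm)
  have hmeet : #(permsThrough Z ∩ univ.biUnion fun j => permsThrough (C j))
      ≤ ∑ j, #(permsThrough Z ∩ permsThrough (C j)) := by
    rw [inter_biUnion]; exact card_biUnion_le
  have hpair : ∀ j, (#(permsThrough Z ∩ permsThrough (C j)) : ℤ)
      ≤ ((#Z)! * (#(C j) - #Z)! * (n - #(C j))! : ℕ) :=
    fun j => by exact_mod_cast card_permsThrough_inter_le (hZC j)
  have hunion :=
    card_union_add_card_inter (permsThrough Z) (univ.biUnion fun j => permsThrough (C j))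
  simp only [upperOnlyChainCount, sum_sub_distrib]
  rw [htops, card_permsThrough] at hunion
  simp only [card_permsThrough] at hunion hpair
  have := sum_le_sum fun j (_ : j ∈ univ) => hpair j
  push_cast at *
  linarith

def permsMeeting (g : WPoset ↪o Finset (Fin n)) : Finset (Equiv.Perm (Fin n)) :=
  permsThrough (g none) ∪ univ.biUnion fun j : Fin 3 => permsThrough (g (some j))

theorem mul_le_card_permsMeeting_mul (g : WPoset ↪o Finset (Fin n)) :
    (n + 2 * ((n - 1) / 2)) * n ! ≤ #(permsMeeting g) * (n * (n - 1).choose ((n - 1) / 2)) := by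
  have hZC (j : Fin 3) : g none ⊆ g (some j) := g.le_iff_le.2 (Or.inl rfl)
  have hC : Pairwise fun j j' : Fin 3 => ¬g (some j) ⊆ g (some j') := fun j j' hne h => by
    rcases g.le_iff_le.1 h with h | h
    · cases h
    · exact hne (Option.some.inj h)
  have hZC' (j : Fin 3) : g none ⊂ g (some j) :=
    ssubset_of_subset_of_ne (hZC j) (g.injective.ne (Option.some_ne_none j).symm)
  have hkey (j : Fin 3) := le_mul_wChainCount (card_lt_card (hZC' j))
    (by simpa using card_le_univ (g (some j)))
  have hcount := mul_le_mul_of_nonneg_left (le_card_permsThrough_union _ _ hZC hC)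
    (by positivity : (0 : ℤ) ≤ (n * (n - 1).choose ((n - 1) / 2) : ℕ))
  simp only [wChainCount, Fin.sum_univ_three] at hkey hcount
  have h₀ := hkey 0; have h₁ := hkey 1; have h₂ := hkey 2
  rw [← permsMeeting] at hcount
  zify
  push_cast at h₀ h₁ h₂ hcount ⊢
  linarith

theorem disjoint_permsMeeting {g g' : WPoset ↪o Finset (Fin n)}
    (h : ∀ w w', ¬g w ⊆ g' w') (h' : ∀ w w', ¬g' w' ⊆ g w) :
    Disjoint (permsMeeting g) (permsMeeting g') := by
  have hmem {g : WPoset ↪o Finset (Fin n)} {σ} (hσ : σ ∈ permsMeeting g) :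
      ∃ w, σ ∈ permsThrough (g w) := by
    simp only [permsMeeting, mem_union, mem_biUnion, mem_univ, true_and] at hσ
    rcases hσ with hσ | ⟨j, hσ⟩
    exacts [⟨none, hσ⟩, ⟨some j, hσ⟩]
  refine disjoint_left.2 fun σ hσ hσ' => ?_
  obtain ⟨w, hw⟩ := hmem hσ
  obtain ⟨w', hw'⟩ := hmem hσ'
  exact disjoint_left.1 (disjoint_permsThrough (h w w') (h' w w')) hw hw'

theorem mul_le_of_orderEmbedding {k : ℕ} (f : (Σ _ : Fin k, WPoset) ↪o Finset (Fin n)) :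
    k * (n + 2 * ((n - 1) / 2)) ≤ n * (n - 1).choose ((n - 1) / 2) := by
  let g (i : Fin k) : WPoset ↪o Finset (Fin n) :=
    (OrderEmbedding.ofMapLEIff (Sigma.mk i) fun _ _ => Sigma.mk_le_mk_iff).trans f
  have hcross {i i'} (hne : i ≠ i') (w w') : ¬g i w ⊆ g i' w' :=
    fun h => hne (Sigma.le_def.1 (f.le_iff_le.1 h)).1
  have hdisj : Set.PairwiseDisjoint (univ : Finset (Fin k)) (permsMeeting ∘ g) :=
    fun i _ i' _ hne => disjoint_permsMeeting (hcross hne) fun w w' => hcross hne.symm w' w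
  have hsum : ∑ i, #(permsMeeting (g i)) ≤ n ! := by
    have := card_le_univ (univ.biUnion (permsMeeting ∘ g))
    rwa [card_biUnion hdisj, Fintype.card_perm, Fintype.card_fin] at this
  refine Nat.le_of_mul_le_mul_right ?_ (factorial_pos n)
  calc k * (n + 2 * ((n - 1) / 2)) * n ! = ∑ i : Fin k, (n + 2 * ((n - 1) / 2)) * n ! := by
        simp [mul_assoc]
    _ ≤ ∑ i, #(permsMeeting (g i)) * (n * (n - 1).choose ((n - 1) / 2)) :=
        sum_le_sum fun i _ => mul_le_card_permsMeeting_mul (g i)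
    _ ≤ _ := by rw [← sum_mul, mul_comm]; exact Nat.mul_le_mul_left _ hsum
end MaximalChains

/-- Upper estimate: for `n ≥ 3`,
`Sp(W,n) ≤ ⌊ n/(3n−2−2⌊n/2⌋) · C(n−1, ⌊(n−1)/2⌋) ⌋`. -/
theorem stmt_17 (n : ℕ) (hn : 3 ≤ n) :
    sSup {k : ℕ | Nonempty ((Σ _ : Fin k, WPoset) ↪o Set (Fin n))}
      ≤ n * (n - 1).choose ((n - 1) / 2) / (3 * n - 2 - 2 * (n / 2)) := by
  refine csSup_le ⟨0, ⟨OrderEmbedding.ofIsEmpty⟩⟩ fun k ⟨f⟩ => ?_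
  rw [show 3 * n - 2 - 2 * (n / 2) = n + 2 * ((n - 1) / 2) by omega,
    Nat.le_div_iff_mul_le (by omega)]
  exact mul_le_of_orderEmbedding (f.trans Fintype.finsetOrderIsoSet.symm.toOrderEmbedding)
end
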